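/- arXiv:2012.13214 — 6 statements merged into one kernel-verified Lean document; each statement's English description precedes it below -/
import Mathlib

section
/- Consider the Markov chain on ℕ with transition probabilities, for a fixed threshold n ≥ 1 and parameters α, β, a ∈ (0,1): from state 0, go to 0 with probability α and to 1 with probability 1−α; from state 1 ≤ k ≤ n−1, go to k+1 with probability β and to 0 with probability 1−β; from state k ≥ n, go to k+1 with probability a and to 0 with probability 1−a. Then the probability distribution σ defined by σ_0 = 1/(1 + (1−α)(1−β^n)/(1−β) + (1−α)aβ^{n−1}/(1−a)), σ_k = (1−α)β^{k−1}σ_0 for 1 ≤ k ≤ n, and σ_k = (1−α)β^{n−1}a^{k−n}σ_0 for k ≥ n+1, is a stationary distribution of this chain (i.e., it is nonnegative, sums to 1, and satisfies the balance equations σ = σP). -/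
/-!
All three regimes of the chain have the same shape: from `k` it advances to `k + 1` with some
probability `q k` and otherwise resets to `0` (with `q 0 = 1 - α`, `q k = β` below the threshold
and `q k = a` from it on). For such a chain, any summable `σ` with `σ (k + 1) = q k * σ k` is
invariant: the balance equation at `k + 1` is the recurrence itself, and the balance equation at
`0` telescopes, `∑ σ i (1 - q i) = ∑ σ i - ∑ σ (i + 1) = σ 0`. The given `σ` satisfies this
recurrence, and its total mass is a finite geometric sum plus a geometric tail.
-/

open Finset

def resetKernel (q : ℕ → ℝ) (i j : ℕ) : ℝ :=
  if j = i + 1 then q i else if j = 0 then 1 - q i else 0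

theorem tsum_mul_resetKernel {σ q : ℕ → ℝ} (hσ : Summable σ)
    (hrec : ∀ k, σ (k + 1) = q k * σ k) (j : ℕ) :
    ∑' i, σ i * resetKernel q i j = σ j := by
  cases j with
  | zero =>
    have hterm : ∀ i, σ i * resetKernel q i 0 = σ i - σ (i + 1) := by
      intro i
      simp only [resetKernel, if_neg (Nat.succ_ne_zero i).symm, if_true, hrec]
      ring
    have hshift : Summable fun i => σ (i + 1) := (summable_nat_add_iff 1).mpr hσ
    rw [tsum_congr hterm, hσ.tsum_sub hshift, hσ.tsum_eq_zero_add]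
    ring
  | succ k =>
    rw [tsum_eq_single k, resetKernel, if_pos rfl, hrec, mul_comm]
    intro i hi
    simp [resetKernel, Ne.symm hi]

theorem nonneg_of_succ_eq_mul {σ q : ℕ → ℝ} (h0 : 0 ≤ σ 0) (hq : ∀ k, 0 ≤ q k)
    (hrec : ∀ k, σ (k + 1) = q k * σ k) (k : ℕ) : 0 ≤ σ k := by
  induction k with
  | zero => exact h0
  | succ k ih => rw [hrec]; exact mul_nonneg (hq k) ih

def thresholdAdvance (α β a : ℝ) (n k : ℕ) : ℝ :=
  if k = 0 then 1 - α else if k < n then β else a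

theorem thresholdAdvance_nonneg {α β a : ℝ} (hα : α ≤ 1) (hβ : 0 ≤ β) (ha : 0 ≤ a) (n k : ℕ) :
    0 ≤ thresholdAdvance α β a n k := by
  unfold thresholdAdvance
  split_ifs <;> linarith

theorem eq_resetKernel_thresholdAdvance {α β a : ℝ} {n : ℕ} {P : ℕ → ℕ → ℝ}
    (hP : ∀ i j, P i j =
      if i = 0 then (if j = 0 then α else if j = 1 then 1 - α else 0)
      else if i < n then (if j = i + 1 then β else if j = 0 then 1 - β else 0)
      else (if j = i + 1 then a else if j = 0 then 1 - a else 0)) :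
    P = resetKernel (thresholdAdvance α β a n) := by
  ext i j
  rw [hP, resetKernel, thresholdAdvance]
  split_ifs <;> first | omega | ring

section ThresholdProfile

variable {α β a : ℝ} {n : ℕ} {σ : ℕ → ℝ}

theorem succ_eq_thresholdAdvance_mul (hn : 1 ≤ n)
    (hσ1 : ∀ k, 1 ≤ k → k ≤ n → σ k = (1 - α) * β ^ (k - 1) * σ 0)
    (hσ2 : ∀ k, n + 1 ≤ k → σ k = (1 - α) * β ^ (n - 1) * a ^ (k - n) * σ 0) (k : ℕ) :
    σ (k + 1) = thresholdAdvance α β a n k * σ k := by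
  unfold thresholdAdvance
  rcases Nat.eq_zero_or_pos k with rfl | hk
  · simp [hσ1 1 le_rfl hn]
  rw [if_neg hk.ne']
  split_ifs with hkn
  · rw [hσ1 (k + 1) (by omega) hkn, hσ1 k hk hkn.le, Nat.add_sub_cancel,
      ← Nat.sub_add_cancel hk, pow_succ, Nat.add_sub_cancel]
    ring
  · have hexp : k + 1 - n = k - n + 1 := by omega
    rw [hσ2 (k + 1) (by omega), hexp, pow_succ]
    rcases (not_lt.mp hkn).eq_or_lt with rfl | hlt
    · rw [hσ1 n hn le_rfl, Nat.sub_self, pow_zero]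
      ring
    · rw [hσ2 k hlt]
      ring

theorem sum_range_threshold (hβ : β ≠ 1)
    (hσ1 : ∀ k, 1 ≤ k → k ≤ n → σ k = (1 - α) * β ^ (k - 1) * σ 0) :
    ∑ k ∈ range (n + 1), σ k = σ 0 * (1 + (1 - α) * (1 - β ^ n) / (1 - β)) := by
  have hbody : ∀ k ∈ range n, σ (k + 1) = (1 - α) * σ 0 * β ^ k := by
    intro k hk
    rw [hσ1 (k + 1) le_add_self (mem_range.mp hk), Nat.add_sub_cancel]
    ring
  have hβ' : 1 - β ≠ 0 := sub_ne_zero.mpr hβ.symm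
  rw [sum_range_succ', sum_congr rfl hbody, ← mul_sum, geom_sum_eq hβ]
  field_simp
  ring

theorem hasSum_threshold_tail (ha0 : 0 ≤ a) (ha1 : a < 1)
    (hσ2 : ∀ k, n + 1 ≤ k → σ k = (1 - α) * β ^ (n - 1) * a ^ (k - n) * σ 0) :
    HasSum (fun k => σ (k + (n + 1))) (σ 0 * ((1 - α) * a * β ^ (n - 1) / (1 - a))) := by
  have hterm : ∀ k, σ (k + (n + 1)) = (1 - α) * β ^ (n - 1) * a * σ 0 * a ^ k := by
    intro k
    rw [hσ2 _ le_add_self, show k + (n + 1) - n = k + 1 by omega, pow_succ]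
    ring
  simp only [hterm]
  rw [show σ 0 * ((1 - α) * a * β ^ (n - 1) / (1 - a))
      = (1 - α) * β ^ (n - 1) * a * σ 0 * (1 - a)⁻¹ by ring]
  exact (hasSum_geometric_of_lt_one ha0 ha1).mul_left _

theorem hasSum_threshold (hβ : β ≠ 1) (ha0 : 0 ≤ a) (ha1 : a < 1)
    (hσ1 : ∀ k, 1 ≤ k → k ≤ n → σ k = (1 - α) * β ^ (k - 1) * σ 0)
    (hσ2 : ∀ k, n + 1 ≤ k → σ k = (1 - α) * β ^ (n - 1) * a ^ (k - n) * σ 0) :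
    HasSum σ (σ 0 * (1 + (1 - α) * (1 - β ^ n) / (1 - β) + (1 - α) * a * β ^ (n - 1) / (1 - a))) := by
  rw [← hasSum_nat_add_iff' (n + 1), sum_range_threshold hβ hσ1, ← mul_sub, add_sub_cancel_left]
  exact hasSum_threshold_tail ha0 ha1 hσ2

end ThresholdProfile

theorem stmt3 (α β a : ℝ) (hα : α ∈ Set.Ioo (0 : ℝ) 1) (hβ : β ∈ Set.Ioo (0 : ℝ) 1)
    (ha : a ∈ Set.Ioo (0 : ℝ) 1) (n : ℕ) (hn : 1 ≤ n)
    (P : ℕ → ℕ → ℝ)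
    (hP : ∀ i j, P i j =
      if i = 0 then (if j = 0 then α else if j = 1 then 1 - α else 0)
      else if i < n then (if j = i + 1 then β else if j = 0 then 1 - β else 0)
      else (if j = i + 1 then a else if j = 0 then 1 - a else 0))
    (σ : ℕ → ℝ)
    (hσ0 : σ 0 = 1 / (1 + (1 - α) * (1 - β ^ n) / (1 - β) + (1 - α) * a * β ^ (n - 1) / (1 - a)))
    (hσ1 : ∀ k, 1 ≤ k → k ≤ n → σ k = (1 - α) * β ^ (k - 1) * σ 0)
    (hσ2 : ∀ k, n + 1 ≤ k → σ k = (1 - α) * β ^ (n - 1) * a ^ (k - n) * σ 0) :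
    (∀ k, 0 ≤ σ k) ∧ Summable σ ∧ (∑' k : ℕ, σ k) = 1 ∧
    ∀ j : ℕ, σ j = ∑' i : ℕ, σ i * P i j := by
  obtain ⟨-, hα1⟩ := hα
  obtain ⟨hβ0, hβ1⟩ := hβ
  obtain ⟨ha0, ha1⟩ := ha
  have h1α : 0 ≤ 1 - α := by linarith
  have h1β : 0 < 1 - β := by linarith
  have h1a : 0 < 1 - a := by linarith
  have h1βn : 0 ≤ 1 - β ^ n := by linarith [pow_le_one₀ hβ0.le hβ1.le (n := n)]
  have hD : 0 < 1 + (1 - α) * (1 - β ^ n) / (1 - β) + (1 - α) * a * β ^ (n - 1) / (1 - a) := by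
    positivity
  have hrec := succ_eq_thresholdAdvance_mul hn hσ1 hσ2
  have hsum : HasSum σ 1 := by
    convert hasSum_threshold hβ1.ne ha0.le ha1 hσ1 hσ2
    rw [hσ0, one_div_mul_cancel hD.ne']
  have hσ0_nonneg : 0 ≤ σ 0 := by rw [hσ0]; positivity
  refine ⟨nonneg_of_succ_eq_mul hσ0_nonneg (thresholdAdvance_nonneg hα1.le hβ0.le ha0.le n) hrec,
    hsum.summable, hsum.tsum_eq, fun j => ?_⟩
  rw [eq_resetKernel_thresholdAdvance hP, tsum_mul_resetKernel hsum.summable hrec]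
end

section
/- With the stationary distribution σ of the threshold-n Markov chain (σ_0 = 1/(1 + (1−α)(1−β^n)/(1−β) + (1−α)aβ^{n−1}/(1−a)), σ_k = (1−α)β^{k−1}σ_0 for 1 ≤ k ≤ n, σ_k = (1−α)β^{n−1}a^{k−n}σ_0 for k ≥ n+1), the total mass on states ≥ n satisfies ∑_{k=n}^∞ σ_k = (1−α)β^{n−1} / [(1−a)(1 + (1−α)(1−β^n)/(1−β) + (1−α)aβ^{n−1}/(1−a))]. -/
theorem tsum_eq_div_one_sub_of_eq_mul_pow {f : ℕ → ℝ} {c r : ℝ} (hr : |r| < 1)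
    (hf : ∀ k, f k = c * r ^ k) : ∑' k, f k = c / (1 - r) := by
  rw [tsum_congr hf, tsum_mul_left, tsum_geometric_of_abs_lt_one hr, div_eq_mul_inv]

theorem threshold_tail_eq_mul_pow {σ : ℕ → ℝ} {α β a : ℝ} {n : ℕ} (hn : 1 ≤ n)
    (hσ1 : ∀ k, 1 ≤ k → k ≤ n → σ k = (1 - α) * β ^ (k - 1) * σ 0)
    (hσ2 : ∀ k, n + 1 ≤ k → σ k = (1 - α) * β ^ (n - 1) * a ^ (k - n) * σ 0) (k : ℕ) :
    σ (n + k) = (1 - α) * β ^ (n - 1) * σ 0 * a ^ k := by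
  rcases k with _ | k
  · rw [add_zero, hσ1 n hn le_rfl, pow_zero, mul_one]
  · rw [hσ2 (n + (k + 1)) (by omega), Nat.add_sub_cancel_left]
    ring

theorem stmt4_general (α β a : ℝ)
    (ha : a ∈ Set.Ioo (0 : ℝ) 1) (n : ℕ) (hn : 1 ≤ n)
    (σ : ℕ → ℝ)
    (hσ0 : σ 0 = 1 / (1 + (1 - α) * (1 - β ^ n) / (1 - β) + (1 - α) * a * β ^ (n - 1) / (1 - a)))
    (hσ1 : ∀ k, 1 ≤ k → k ≤ n → σ k = (1 - α) * β ^ (k - 1) * σ 0)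
    (hσ2 : ∀ k, n + 1 ≤ k → σ k = (1 - α) * β ^ (n - 1) * a ^ (k - n) * σ 0) :
    (∑' k : ℕ, σ (n + k)) =
      (1 - α) * β ^ (n - 1) /
        ((1 - a) * (1 + (1 - α) * (1 - β ^ n) / (1 - β) +
          (1 - α) * a * β ^ (n - 1) / (1 - a))) := by
  have ha_abs : |a| < 1 := abs_lt.2 ⟨by linarith [ha.1], ha.2⟩
  rw [tsum_eq_div_one_sub_of_eq_mul_pow ha_abs (threshold_tail_eq_mul_pow hn hσ1 hσ2), hσ0,
    mul_one_div, div_mul_eq_div_div_swap]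

theorem stmt4 (α β a : ℝ) (hα : α ∈ Set.Ioo (0 : ℝ) 1) (hβ : β ∈ Set.Ioo (0 : ℝ) 1)
    (ha : a ∈ Set.Ioo (0 : ℝ) 1) (hab : a < β) (n : ℕ) (hn : 1 ≤ n)
    (σ : ℕ → ℝ)
    (hσ0 : σ 0 = 1 / (1 + (1 - α) * (1 - β ^ n) / (1 - β) + (1 - α) * a * β ^ (n - 1) / (1 - a)))
    (hσ1 : ∀ k, 1 ≤ k → k ≤ n → σ k = (1 - α) * β ^ (k - 1) * σ 0)
    (hσ2 : ∀ k, n + 1 ≤ k → σ k = (1 - α) * β ^ (n - 1) * a ^ (k - n) * σ 0) :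
    (∑' k : ℕ, σ (n + k)) =
      (1 - α) * β ^ (n - 1) /
        ((1 - a) * (1 + (1 - α) * (1 - β ^ n) / (1 - β) +
          (1 - α) * a * β ^ (n - 1) / (1 - a))) :=
  stmt4_general α β a ha n hn σ hσ0 hσ1 hσ2
end

section
/- The average update rate C(n) = (1−α)β^{n−1} / [(1−a)(1 + (1−α)(1−β^n)/(1−β) + (1−α)aβ^{n−1}/(1−a))], defined for integers n ≥ 1 with parameters α ∈ [0,1), a, β ∈ (0,1), a < β, is strictly decreasing in n. -/
/-! Write `D n` for the denominator of `C n`, so that `C n = (1 - α) β^(n-1) / D n`. The numerator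
is multiplied by `β` from `n` to `n + 1`, while the denominator satisfies the exact relation
`D (n + 1) - β D n = (1 - a) ((1 - β) + (1 - α)) > 0`. Hence `C (n + 1) < C n`. -/

theorem mul_div_lt_div_of_mul_lt {r x y y' : ℝ} (hr : 0 < r) (hx : 0 < x) (hy : 0 < y)
    (h : r * y < y') : r * x / y' < x / y := by
  have hy' : 0 < y' := (mul_pos hr hy).trans h
  rw [div_lt_div_iff₀ hy' hy]
  calc r * x * y = x * (r * y) := by ring
    _ < x * y' := mul_lt_mul_of_pos_left h hx

namespace UpdateRate

/-- The denominator of `C (k + 1)`; indexing by `k = n - 1` avoids truncated subtraction. -/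
noncomputable def den (α β a : ℝ) (k : ℕ) : ℝ :=
  (1 - a) * (1 + (1 - α) * (1 - β ^ (k + 1)) / (1 - β) + (1 - α) * a * β ^ k / (1 - a))

variable {α β a : ℝ}

theorem den_pos (hα : α < 1) (hβ0 : 0 ≤ β) (hβ1 : β < 1) (ha0 : 0 ≤ a) (ha1 : a < 1) (k : ℕ) :
    0 < den α β a k := by
  have hpow : β ^ (k + 1) ≤ 1 := pow_le_one₀ hβ0 hβ1.le
  have hβk : 0 ≤ β ^ k := pow_nonneg hβ0 k
  have hgeom : 0 ≤ (1 - α) * (1 - β ^ (k + 1)) / (1 - β) :=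
    div_nonneg (mul_nonneg (by linarith) (by linarith)) (by linarith)
  have hlast : 0 ≤ (1 - α) * a * β ^ k / (1 - a) :=
    div_nonneg (mul_nonneg (mul_nonneg (by linarith) ha0) hβk) (by linarith)
  exact mul_pos (by linarith) (by linarith)

theorem den_succ_sub_mul_den (hβ : β ≠ 1) (ha : a ≠ 1) (k : ℕ) :
    den α β a (k + 1) - β * den α β a k = (1 - a) * ((1 - β) + (1 - α)) := by
  have hβ' : 1 - β ≠ 0 := sub_ne_zero.mpr hβ.symm
  have ha' : 1 - a ≠ 0 := sub_ne_zero.mpr ha.symm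
  unfold den
  field_simp
  ring

theorem mul_den_lt_den_succ (hα : α < 1) (hβ : β < 1) (ha : a < 1) (k : ℕ) :
    β * den α β a k < den α β a (k + 1) := by
  have h := den_succ_sub_mul_den (α := α) hβ.ne ha.ne k
  have : 0 < (1 - a) * ((1 - β) + (1 - α)) := mul_pos (by linarith) (by linarith)
  linarith

end UpdateRate

open UpdateRate

theorem stmt5_general (α β a : ℝ) (hα1 : α < 1)
    (hβ : β ∈ Set.Ioo (0 : ℝ) 1) (ha : a ∈ Set.Ioo (0 : ℝ) 1)
    (C : ℕ → ℝ)
    (hC : ∀ n : ℕ, 1 ≤ n → C n =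
      (1 - α) * β ^ (n - 1) /
        ((1 - a) * (1 + (1 - α) * (1 - β ^ n) / (1 - β) +
          (1 - α) * a * β ^ (n - 1) / (1 - a)))) :
    StrictAntiOn C (Set.Ici 1) := by
  obtain ⟨hβ0, hβ1⟩ := hβ
  obtain ⟨ha0, ha1⟩ := ha
  have hC' (k : ℕ) : C (k + 1) = (1 - α) * β ^ k / den α β a k :=
    hC (k + 1) (Nat.le_add_left 1 k)
  refine strictAntiOn_of_succ_lt Set.ordConnected_Ici fun n _ hn _ => ?_
  obtain ⟨k, rfl⟩ := Nat.exists_eq_add_of_le' (Set.mem_Ici.mp hn)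
  rw [Order.succ_eq_add_one, hC', hC', pow_succ', mul_left_comm]
  exact mul_div_lt_div_of_mul_lt hβ0 (mul_pos (by linarith) (pow_pos hβ0 k))
    (den_pos hα1 hβ0.le hβ1 ha0.le ha1 k) (mul_den_lt_den_succ hα1 hβ1 ha1 k)

theorem stmt5 (α β a : ℝ) (hα0 : 0 ≤ α) (hα1 : α < 1)
    (hβ : β ∈ Set.Ioo (0 : ℝ) 1) (ha : a ∈ Set.Ioo (0 : ℝ) 1) (hab : a < β)
    (C : ℕ → ℝ)
    (hC : ∀ n : ℕ, 1 ≤ n → C n =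
      (1 - α) * β ^ (n - 1) /
        ((1 - a) * (1 + (1 - α) * (1 - β ^ n) / (1 - β) +
          (1 - α) * a * β ^ (n - 1) / (1 - a)))) :
    StrictAntiOn C (Set.Ici 1) :=
  stmt5_general α β a hα1 hβ ha C hC
end

section
/- Let (V_t)_{t∈ℕ} be the sequence of functions on ℕ defined by V_0 ≡ 0 and V_{t+1}(S) = min{ f(S) + β V_t(S+1), f(S) + λ + a V_t(S+1) } − f(0) − (1−α)V_t(1) for S ≥ 1, and V_{t+1}(0) = 0, where f : ℕ → [0,∞) is non-decreasing, λ ≥ 0 and 0 < a < β < 1, α ∈ (0,1). Then for every t ∈ ℕ, V_t is non-decreasing on ℕ (for all S₂ ≥ S₁ ≥ 0, V_t(S₂) ≥ V_t(S₁)). -/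
/-!
Induct on `t` with a strengthened hypothesis: besides monotonicity of `V t`, each branch of the
minimum dominates `f 0 + (1 - α) V t S` for `S ≥ 1`. That inequality at `S = 1` is exactly
`V (t + 1) 1 ≥ 0 = V (t + 1) 0`; for `S ≥ 1` monotonicity passes through the minimum of
non-decreasing functions. The strengthened inequality survives a step either because
`1 - α ≤ p` for the branch's continuation probability `p` (then monotonicity suffices), or,
when `p < 1 - α`, by unfolding the recursion once more.
-/

noncomputable def bellmanMin (f : ℕ → ℝ) (β a lam : ℝ) (V : ℕ → ℝ) (S : ℕ) : ℝ :=
  min (f S + β * V (S + 1)) (f S + lam + a * V (S + 1))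

def IsBellmanSubsolution (f : ℕ → ℝ) (β a lam c : ℝ) (V : ℕ → ℝ) : Prop :=
  ∀ S, 1 ≤ S → f 0 + c * V S ≤ bellmanMin f β a lam V S

section

variable {f : ℕ → ℝ} {β a lam c : ℝ}

theorem monotone_bellmanMin {V : ℕ → ℝ} (hf : Monotone f) (hV : Monotone V)
    (hβ : 0 ≤ β) (ha : 0 ≤ a) : Monotone (bellmanMin f β a lam V) := by
  intro S T hST
  have hfST := hf hST
  have hVST := hV (Nat.succ_le_succ hST)
  unfold bellmanMin
  gcongr

/-- One branch of the minimum, with cost `g` and continuation probability `p`. -/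
theorem branch_step {c p f₀ g v₁ v w w' : ℝ} (hc0 : 0 ≤ c) (hc1 : c ≤ 1) (hp : 0 ≤ p)
    (hg : f₀ ≤ g) (hv₁ : 0 ≤ v₁) (hw : 0 ≤ w) (hww' : w ≤ w')
    (hw_le : w + f₀ + c * v₁ ≤ g + p * v) (hv_le : c * v ≤ w' + c * v₁) :
    f₀ + c * w ≤ g + p * w' := by
  rcases le_or_gt c p with hcp | hpc
  · nlinarith [mul_le_mul_of_nonneg_right hcp hw, mul_le_mul_of_nonneg_left hww' hp]
  · nlinarith [mul_le_mul_of_nonneg_left hw_le hc0, mul_le_mul_of_nonneg_left hv_le hp,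
      mul_nonneg hc0 (mul_nonneg (sub_nonneg.2 hpc.le) hv₁),
      mul_nonneg (sub_nonneg.2 hc1) (sub_nonneg.2 hg)]

variable {V W : ℕ → ℝ} (hf : Monotone f) (hβ : 0 ≤ β) (ha : 0 ≤ a)
  (hV : Monotone V) (hVsub : IsBellmanSubsolution f β a lam c V) (hW0 : W 0 = 0)
  (hWrec : ∀ S, 1 ≤ S → W S = bellmanMin f β a lam V S - f 0 - c * V 1)
include hf hβ ha hV hVsub hW0 hWrec

theorem monotone_of_relative_step : Monotone W := by
  refine monotone_nat_of_le_succ fun S => ?_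
  rcases S with _ | S
  · rw [hW0, hWrec 1 le_rfl]
    linarith [hVsub 1 le_rfl]
  · rw [hWrec _ (by omega), hWrec _ (by omega)]
    linarith [monotone_bellmanMin (lam := lam) hf hV hβ ha (Nat.le_succ (S + 1))]

theorem isBellmanSubsolution_of_relative_step (hlam : 0 ≤ lam) (hc0 : 0 ≤ c) (hc1 : c ≤ 1)
    (hV0 : V 0 = 0) : IsBellmanSubsolution f β a lam c W := by
  intro S hS
  have hWmono := monotone_of_relative_step hf hβ ha hV hVsub hW0 hWrec
  have hv₁ : 0 ≤ V 1 := hV0 ▸ hV (Nat.zero_le 1)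
  have hw : 0 ≤ W S := hW0 ▸ hWmono (Nat.zero_le S)
  have hWS : W S + f 0 + c * V 1 = bellmanMin f β a lam V S := by linarith [hWrec S hS]
  have hWS' : c * V (S + 1) ≤ W (S + 1) + c * V 1 := by
    linarith [hWrec (S + 1) (by omega), hVsub (S + 1) (by omega)]
  have hf0 : f 0 ≤ f S := hf (Nat.zero_le S)
  exact le_min
    (branch_step hc0 hc1 hβ hf0 hv₁ hw (hWmono S.le_succ) (hWS.trans_le (min_le_left _ _)) hWS')
    (branch_step hc0 hc1 ha (by linarith) hv₁ hw (hWmono S.le_succ)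
      (hWS.trans_le (min_le_right _ _)) hWS')

end

theorem stmt10_general (f : ℕ → ℝ) (hfmono : Monotone f)
    (a β α lam : ℝ) (ha0 : 0 < a) (hab : a < β)
    (hα : α ∈ Set.Ioo (0 : ℝ) 1) (hlam : 0 ≤ lam)
    (V : ℕ → ℕ → ℝ)
    (hV0 : ∀ S, V 0 S = 0)
    (hVz : ∀ t, V (t + 1) 0 = 0)
    (hVrec : ∀ t S, 1 ≤ S → V (t + 1) S =
      min (f S + β * V t (S + 1)) (f S + lam + a * V t (S + 1)) - f 0 - (1 - α) * V t 1) :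
    ∀ t, Monotone (V t) := by
  obtain ⟨hα0, hα1⟩ := hα
  have hβ : 0 ≤ β := (ha0.trans hab).le
  have hc0 : 0 ≤ 1 - α := by linarith
  have hc1 : 1 - α ≤ 1 := by linarith
  suffices h : ∀ t, V t 0 = 0 ∧ Monotone (V t) ∧ IsBellmanSubsolution f β a lam (1 - α) (V t) from
    fun t => (h t).2.1
  intro t
  induction t with
  | zero =>
    refine ⟨hV0 0, fun _ _ _ => by simp [hV0], fun S _ => ?_⟩
    simp only [bellmanMin, hV0, mul_zero, add_zero, le_min_iff]
    exact ⟨hfmono (Nat.zero_le S), by linarith [hfmono (Nat.zero_le S)]⟩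
  | succ t ih =>
    obtain ⟨hVt0, hmono, hsub⟩ := ih
    exact ⟨hVz t, monotone_of_relative_step hfmono hβ ha0.le hmono hsub (hVz t) (hVrec t),
      isBellmanSubsolution_of_relative_step hfmono hβ ha0.le hmono hsub (hVz t) (hVrec t)
        hlam hc0 hc1 hVt0⟩

theorem stmt10 (f : ℕ → ℝ) (hf0 : ∀ k, 0 ≤ f k) (hfmono : Monotone f)
    (a β α lam : ℝ) (ha0 : 0 < a) (hab : a < β) (hβ1 : β < 1)
    (hα : α ∈ Set.Ioo (0 : ℝ) 1) (hlam : 0 ≤ lam)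
    (V : ℕ → ℕ → ℝ)
    (hV0 : ∀ S, V 0 S = 0)
    (hVz : ∀ t, V (t + 1) 0 = 0)
    (hVrec : ∀ t S, 1 ≤ S → V (t + 1) S =
      min (f S + β * V t (S + 1)) (f S + lam + a * V t (S + 1)) - f 0 - (1 - α) * V t 1) :
    ∀ t, Monotone (V t) :=
  stmt10_general f hfmono a β α lam ha0 hab hα hlam V hV0 hVz hVrec
end

section
/- Under the setting of the relative value iteration above (V_0 ≡ 0, V_{t+1}(S) = min{f(S)+βV_t(S+1), f(S)+λ+aV_t(S+1)} − f(0) − (1−α)V_t(1) for S ≥ 1, with f non-decreasing, 0 < a < β < 1, λ ≥ 0), define ΔV_{t+1}(S) = (f(S)+λ+aV_t(S+1)) − (f(S)+βV_t(S+1)) = λ + (a−β)V_t(S+1). Then for every t, ΔV_{t+1} is non-increasing in S; consequently the set of states where transmitting is (weakly) preferred, {S ≥ 1 : ΔV_{t+1}(S) ≤ 0}, is an upward-closed subset of ℕ (i.e., the optimal policy at each iteration is a threshold policy). -/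
/-! Each iteration of relative value iteration maps functions that are non-decreasing on `S ≥ 1`
to functions of the same kind, because both actions cost a non-decreasing `f S` plus a
non-negative multiple of the next value; by induction every iterate `V t` is non-decreasing.
Since `a - β < 0`, the advantage `lam + (a - β) V t (S + 1)` of idling is then non-increasing,
so once transmitting is preferred it stays preferred. -/

theorem monotone_min_idle_transmit_cost {f g : ℕ → ℝ} (hf : Monotone f) (hg : Monotone g)
    {a β : ℝ} (ha : 0 ≤ a) (hβ : 0 ≤ β) (lam : ℝ) :
    Monotone fun S => min (f S + β * g S) (f S + lam + a * g S) := fun _ _ h =>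
  min_le_min (by gcongr; exacts [hf h, hg h]) (by gcongr; exacts [hf h, hg h])

theorem monotoneOn_relativeValueIterate {f : ℕ → ℝ} (hf : Monotone f) {a β lam : ℝ}
    (ha : 0 ≤ a) (hβ : 0 ≤ β) {V : ℕ → ℕ → ℝ} (c : ℕ → ℝ) (hV0 : ∀ S, V 0 S = 0)
    (hVrec : ∀ t S, 1 ≤ S → V (t + 1) S =
      min (f S + β * V t (S + 1)) (f S + lam + a * V t (S + 1)) - c t) (t : ℕ) :
    MonotoneOn (V t) (Set.Ici 1) := by
  induction t with
  | zero => intro _ _ _ _ _; simp [hV0]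
  | succ t ih =>
    intro S₁ h₁ S₂ h₂ h
    rw [hVrec t S₁ h₁, hVrec t S₂ h₂]
    have hnext : Monotone fun S => V t (S + 1) := fun x y hxy =>
      ih (Set.mem_Ici.2 (Nat.le_add_left 1 x)) (Set.mem_Ici.2 (Nat.le_add_left 1 y))
        (Nat.add_le_add_right hxy 1)
    exact sub_le_sub_right (monotone_min_idle_transmit_cost hf hnext ha hβ lam h) _

theorem stmt11_general (f : ℕ → ℝ) (hfmono : Monotone f)
    (a β α lam : ℝ) (ha0 : 0 < a) (hab : a < β)
    (V : ℕ → ℕ → ℝ)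
    (hV0 : ∀ S, V 0 S = 0)
    (hVrec : ∀ t S, 1 ≤ S → V (t + 1) S =
      min (f S + β * V t (S + 1)) (f S + lam + a * V t (S + 1)) - f 0 - (1 - α) * V t 1)
    (Δ : ℕ → ℕ → ℝ)
    (hΔ : ∀ t S, Δ (t + 1) S = lam + (a - β) * V t (S + 1)) :
    ∀ t, (∀ S₁ S₂ : ℕ, S₁ ≤ S₂ → Δ (t + 1) S₂ ≤ Δ (t + 1) S₁) ∧
      ∀ S S' : ℕ, 1 ≤ S → S ≤ S' → Δ (t + 1) S ≤ 0 → Δ (t + 1) S' ≤ 0 := by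
  intro t
  have hV : MonotoneOn (V t) (Set.Ici 1) :=
    monotoneOn_relativeValueIterate hfmono ha0.le (ha0.trans hab).le
      (fun t => f 0 + (1 - α) * V t 1) hV0 (fun t S hS => by rw [hVrec t S hS, sub_sub]) t
  have hΔanti : Antitone (Δ (t + 1)) := fun S₁ S₂ h => by
    have hle : V t (S₁ + 1) ≤ V t (S₂ + 1) :=
      hV (Set.mem_Ici.2 (Nat.le_add_left 1 S₁)) (Set.mem_Ici.2 (Nat.le_add_left 1 S₂))
        (Nat.add_le_add_right h 1)
    rw [hΔ, hΔ]
    exact add_le_add_right (mul_le_mul_of_nonpos_left hle (sub_nonpos.2 hab.le)) lam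
  exact ⟨fun _ _ h => hΔanti h, fun _ _ _ h h0 => (hΔanti h).trans h0⟩

theorem stmt11 (f : ℕ → ℝ) (hf0 : ∀ k, 0 ≤ f k) (hfmono : Monotone f)
    (a β α lam : ℝ) (ha0 : 0 < a) (hab : a < β) (hβ1 : β < 1)
    (hα : α ∈ Set.Ioo (0 : ℝ) 1) (hlam : 0 ≤ lam)
    (V : ℕ → ℕ → ℝ)
    (hV0 : ∀ S, V 0 S = 0)
    (hVz : ∀ t, V (t + 1) 0 = 0)
    (hVrec : ∀ t S, 1 ≤ S → V (t + 1) S =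
      min (f S + β * V t (S + 1)) (f S + lam + a * V t (S + 1)) - f 0 - (1 - α) * V t 1)
    (Δ : ℕ → ℕ → ℝ)
    (hΔ : ∀ t S, Δ (t + 1) S = lam + (a - β) * V t (S + 1)) :
    ∀ t, (∀ S₁ S₂ : ℕ, S₁ ≤ S₂ → Δ (t + 1) S₂ ≤ Δ (t + 1) S₁) ∧
      ∀ S S' : ℕ, 1 ≤ S → S ≤ S' → Δ (t + 1) S ≤ 0 → Δ (t + 1) S' ≤ 0 :=
  stmt11_general f hfmono a β α lam ha0 hab V hV0 hVrec Δ hΔ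
end

section
/- Let α ∈ (0,1), 0 < a < β < 1, λ ≥ 0, and f : ℕ → [0,∞) non-decreasing, unbounded, with ∑_k f(k)a^k < ∞. Define θ_n as in the closed-form expression of Theorem 1 and H(n) = [−θ_n(β−a) + λ(β−1)]/[(1−a)(β−a)] + ∑_{k=n}^∞ f(k)a^{k−n}. Then H(n) > 0 for all sufficiently large n; equivalently, the set {n ∈ ℕ, n ≥ 1 : H(n) > 0} is nonempty, so n* = inf{n ≥ 1 : H(n) > 0} − 1 is well-defined. -/
/-!
The tail sum `T n = ∑' k, f (n + k) * a ^ k` is at least `f n`, so it tends to infinity, and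
`H n = T n - θ n / (1 - a) - const`. The denominator of `θ n` is at least `1 / (1 - α)`, so `θ n`
is at most `(1 - α)` times its numerator, and every term of that numerator is `o(T n)`: the finite
sum is `o(f n)` because its geometric weights are summable and `f` is monotone, and
`β ^ (n - 1) → 0`. Hence `H n ~ T n → ∞`.
-/

open Filter Asymptotics Finset

lemma summable_mul_pow_nat_add {f : ℕ → ℝ} {a : ℝ} (ha : a ≠ 0)
    (hs : Summable fun k => f k * a ^ k) (n : ℕ) :
    Summable fun k => f (n + k) * a ^ k := by
  refine (((summable_nat_add_iff n).2 hs).mul_right (a ^ n)⁻¹).congr fun k => ?_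
  rw [add_comm k n, pow_add]
  field_simp [pow_ne_zero n ha]

lemma le_tsum_mul_pow_nat_add {f : ℕ → ℝ} {a : ℝ} (ha : 0 < a) (hf : ∀ k, 0 ≤ f k)
    (hs : Summable fun k => f k * a ^ k) (n : ℕ) :
    f n ≤ ∑' k, f (n + k) * a ^ k := by
  simpa using (summable_mul_pow_nat_add ha.ne' hs n).le_tsum 0
    fun k _ => mul_nonneg (hf _) (pow_nonneg ha.le _)

lemma tendsto_tsum_mul_pow_nat_add_atTop {f : ℕ → ℝ} {a : ℝ} (ha : 0 < a) (hf : ∀ k, 0 ≤ f k)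
    (hft : Tendsto f atTop atTop) (hs : Summable fun k => f k * a ^ k) :
    Tendsto (fun n => ∑' k, f (n + k) * a ^ k) atTop atTop :=
  tendsto_atTop_mono (le_tsum_mul_pow_nat_add ha hf hs) hft

lemma isLittleO_sum_range_mul_of_summable {w g : ℕ → ℝ} (hw : ∀ i, 0 ≤ w i)
    (hws : Summable w) (hg0 : ∀ i, 0 ≤ g i) (hg : Monotone g) (hgt : Tendsto g atTop atTop) :
    (fun n => ∑ i ∈ range n, w i * g i) =o[atTop] g := by
  refine isLittleO_iff.2 fun c hc => ?_
  obtain ⟨m, hm⟩ := ((tendsto_sum_nat_add w).eventually (gt_mem_nhds (half_pos hc))).exists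
  set A := ∑ i ∈ range m, w i * g i
  filter_upwards [eventually_ge_atTop m, hgt.eventually_ge_atTop (2 * A / c)] with n hmn hgn
  have htail : ∑ i ∈ Ico m n, w i ≤ ∑' k, w (k + m) := by
    rw [sum_Ico_eq_sum_range]
    simpa only [add_comm m] using ((summable_nat_add_iff m).2 hws).sum_le_tsum (range (n - m))
      fun k _ => hw _
  have hsum : ∑ i ∈ range n, w i * g i ≤ A + g n * (c / 2) := calc
    ∑ i ∈ range n, w i * g i = A + ∑ i ∈ Ico m n, w i * g i :=
      (sum_range_add_sum_Ico _ hmn).symm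
    _ ≤ A + ∑ i ∈ Ico m n, w i * g n := by
      gcongr with i hi
      · exact hw i
      · exact hg (mem_Ico.1 hi).2.le
    _ = A + g n * ∑ i ∈ Ico m n, w i := by rw [← sum_mul, mul_comm]
    _ ≤ A + g n * (c / 2) := by gcongr; exacts [hg0 n, htail.trans hm.le]
  have hA : 0 ≤ A := sum_nonneg fun i _ => mul_nonneg (hw i) (hg0 i)
  rw [Real.norm_of_nonneg (sum_nonneg fun i _ => mul_nonneg (hw i) (hg0 i)),
    Real.norm_of_nonneg (hg0 n)]
  rw [div_le_iff₀ hc] at hgn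
  nlinarith

lemma sum_Icc_one_sub_eq_sum_range {M : Type*} [AddCommMonoid M] (F : ℕ → M) (n : ℕ) :
    ∑ k ∈ Icc 1 (n - 1), F (n - k) = ∑ i ∈ range (n - 1), F (i + 1) := by
  refine sum_nbij' (fun k => n - 1 - k) (fun i => n - 1 - i) ?_ ?_ ?_ ?_ ?_ <;>
    intro k hk <;> simp only [mem_Icc, mem_range] at hk ⊢
  all_goals first | omega | (congr 1; omega)

lemma isLittleO_sum_Icc_mul_pow {f : ℕ → ℝ} {β : ℝ} (hβ0 : 0 ≤ β) (hβ1 : β < 1)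
    (hf0 : ∀ k, 0 ≤ f k) (hf : Monotone f) (hft : Tendsto f atTop atTop) :
    (fun n => ∑ k ∈ Icc 1 (n - 1), f (n - k) * β ^ (n - k - 1)) =o[atTop] f := by
  have h := (isLittleO_sum_range_mul_of_summable (fun i => pow_nonneg hβ0 i)
    (summable_geometric_of_lt_one hβ0 hβ1) (fun i => hf0 (i + 1))
    (fun i j hij => hf (Nat.add_le_add_right hij 1))
    (hft.comp (tendsto_add_atTop_nat 1))).comp_tendsto (tendsto_sub_atTop_nat 1)
  refine h.congr' (Eventually.of_forall fun n => ?_) (eventually_ge_atTop 1 |>.mono fun n hn => ?_)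
  · simp [sum_Icc_one_sub_eq_sum_range (fun j => f j * β ^ (j - 1)), mul_comm]
  · simp [Nat.sub_add_cancel hn]

lemma tendsto_sub_atTop_of_isLittleO {ι : Type*} {l : Filter ι} {T E : ι → ℝ}
    (hT : Tendsto T l atTop) (hE : E =o[l] T) : Tendsto (T - E) l atTop :=
  ((IsEquivalent.refl).sub_isLittleO hE).symm.tendsto_atTop hT

lemma closed_form_le {α β a lam x S T p : ℝ} (hα : α < 1) (ha : a < 1) (hβ : β < 1)
    (hlam : 0 ≤ lam) (hx : 0 ≤ x) (hS : 0 ≤ S) (hT : 0 ≤ T) (hp0 : 0 ≤ p) (hp1 : p ≤ 1) :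
    (x / (1 - α) + S + p * T + lam * p / (1 - a)) /
        (1 / (1 - α) + (1 - p) / (1 - β) + p / (1 - a)) ≤
      (1 - α) * (x / (1 - α) + lam / (1 - a) + S + p * T) := by
  have h1α : 0 < 1 - α := by linarith
  have h1a : 0 < 1 - a := by linarith
  calc _ ≤ (x / (1 - α) + S + p * T + lam * p / (1 - a)) / (1 / (1 - α)) := by
        gcongr
        exact le_add_of_le_of_nonneg (le_add_of_nonneg_right
            (div_nonneg (by linarith) (by linarith))) (by positivity)
    _ ≤ (1 - α) * (x / (1 - α) + lam / (1 - a) + S + p * T) := by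
        rw [div_div_eq_mul_div, div_one, mul_comm]
        gcongr (1 - α) * ?_
        have : lam * p / (1 - a) ≤ lam / (1 - a) := by
          gcongr; exact mul_le_of_le_one_right hlam hp1
        linarith

lemma sub_le_of_closed_form {α β a lam x S T p θ H : ℝ} (hα : α < 1) (hab : a < β) (hβ : β < 1)
    (hlam : 0 ≤ lam) (hx : 0 ≤ x) (hS : 0 ≤ S) (hT : 0 ≤ T) (hp0 : 0 ≤ p) (hp1 : p ≤ 1)
    (hθ : θ = (x / (1 - α) + S + p * T + lam * p / (1 - a)) /
        (1 / (1 - α) + (1 - p) / (1 - β) + p / (1 - a)))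
    (hH : H = (-θ * (β - a) + lam * (β - 1)) / ((1 - a) * (β - a)) + T) :
    T - ((1 - α) / (1 - a) * (x / (1 - α) + lam / (1 - a) + S + p * T) +
      lam * (1 - β) / ((1 - a) * (β - a))) ≤ H := by
  have h1a : 0 < 1 - a := by linarith
  have hβa : β - a ≠ 0 := (sub_pos.2 hab).ne'
  have hθle : θ / (1 - a) ≤ (1 - α) / (1 - a) * (x / (1 - α) + lam / (1 - a) + S + p * T) := by
    rw [div_mul_eq_mul_div, div_le_div_iff_of_pos_right h1a, hθ]
    exact closed_form_le hα (hab.trans hβ) hβ hlam hx hS hT hp0 hp1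
  have hH' : H = T - θ / (1 - a) - lam * (1 - β) / ((1 - a) * (β - a)) := by
    rw [hH]
    field_simp
    ring
  linarith

lemma isLittleO_tsum_mul_pow_nat_add {f : ℕ → ℝ} {a β : ℝ} (ha : 0 < a) (hβ0 : 0 ≤ β)
    (hβ1 : β < 1) (hf0 : ∀ k, 0 ≤ f k) (hf : Monotone f) (hft : Tendsto f atTop atTop)
    (hs : Summable fun k => f k * a ^ k) (c : ℝ) :
    (fun n => c + ∑ k ∈ Icc 1 (n - 1), f (n - k) * β ^ (n - k - 1) +
      β ^ (n - 1) * ∑' k, f (n + k) * a ^ k) =o[atTop] fun n => ∑' k, f (n + k) * a ^ k := by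
  have hle := le_tsum_mul_pow_nat_add ha hf0 hs
  have hfT : f =O[atTop] fun n => ∑' k, f (n + k) * a ^ k :=
    .of_bound' <| .of_forall fun n => by
      rw [Real.norm_of_nonneg (hf0 n), Real.norm_of_nonneg ((hf0 n).trans (hle n))]
      exact hle n
  have hpow : (fun n => β ^ (n - 1)) =o[atTop] fun _ => (1 : ℝ) :=
    (isLittleO_one_iff ℝ).2 <|
      (tendsto_pow_atTop_nhds_zero_of_lt_one hβ0 hβ1).comp (tendsto_sub_atTop_nat 1)
  refine ((isLittleO_const_left.2 (.inr (tendsto_norm_atTop_atTop.comp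
    (tendsto_tsum_mul_pow_nat_add_atTop ha hf0 hft hs)))).add
    ((isLittleO_sum_Icc_mul_pow hβ0 hβ1 hf0 hf hft).trans_isBigO hfT)).add ?_
  simpa using hpow.mul_isBigO (isBigO_refl (fun n => ∑' k, f (n + k) * a ^ k) atTop)

theorem stmt12 (α β a lam : ℝ) (hα : α ∈ Set.Ioo (0 : ℝ) 1)
    (ha0 : 0 < a) (hab : a < β) (hβ1 : β < 1) (hlam : 0 ≤ lam)
    (f : ℕ → ℝ) (hf0 : ∀ k, 0 ≤ f k) (hfmono : Monotone f)
    (hfinf : Filter.Tendsto f Filter.atTop Filter.atTop)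
    (hsum : Summable fun k => f k * a ^ k)
    (θ : ℕ → ℝ)
    (hθ : ∀ n : ℕ, 1 ≤ n → θ n =
      (f 0 / (1 - α) + (∑ k ∈ Finset.Icc 1 (n - 1), f (n - k) * β ^ (n - k - 1)) +
        β ^ (n - 1) * (∑' k : ℕ, f (n + k) * a ^ k) + lam * β ^ (n - 1) / (1 - a)) /
        (1 / (1 - α) + (1 - β ^ (n - 1)) / (1 - β) + β ^ (n - 1) / (1 - a)))
    (H : ℕ → ℝ)
    (hH : ∀ n : ℕ, H n = (-θ n * (β - a) + lam * (β - 1)) / ((1 - a) * (β - a)) +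
      ∑' k : ℕ, f (n + k) * a ^ k) :
    (∃ N : ℕ, 1 ≤ N ∧ ∀ n, N ≤ n → 0 < H n) ∧
    {n : ℕ | 1 ≤ n ∧ 0 < H n}.Nonempty := by
  have hβ0 : 0 < β := ha0.trans hab
  set T := fun n => ∑' k, f (n + k) * a ^ k
  set S := fun n => ∑ k ∈ Icc 1 (n - 1), f (n - k) * β ^ (n - k - 1)
  have hT : Tendsto T atTop atTop := tendsto_tsum_mul_pow_nat_add_atTop ha0 hf0 hfinf hsum
  set E := fun n => (1 - α) / (1 - a) * (f 0 / (1 - α) + lam / (1 - a) + S n + β ^ (n - 1) * T n)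
    + lam * (1 - β) / ((1 - a) * (β - a))
  have hE : E =o[atTop] T :=
    ((isLittleO_tsum_mul_pow_nat_add ha0 hβ0.le hβ1 hf0 hfmono hfinf hsum _).const_mul_left _).add
      (isLittleO_const_left.2 (.inr (tendsto_norm_atTop_atTop.comp hT)))
  have hlow : ∀ n, 1 ≤ n → T n - E n ≤ H n := fun n hn =>
    sub_le_of_closed_form hα.2 hab hβ1 hlam (hf0 0)
      (sum_nonneg fun k _ => mul_nonneg (hf0 _) (pow_nonneg hβ0.le _))
      (tsum_nonneg fun k => mul_nonneg (hf0 _) (pow_nonneg ha0.le _))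
      (pow_nonneg hβ0.le _) (pow_le_one₀ hβ0.le hβ1.le) (hθ n hn) (hH n)
  obtain ⟨N, hN⟩ := eventually_atTop.1 <|
    ((tendsto_sub_atTop_of_isLittleO hT hE).eventually_gt_atTop 0).and (eventually_ge_atTop 1)
  have hpos : ∀ n, N ≤ n → 0 < H n := fun n hn =>
    (hN n hn).1.trans_le (hlow n (hN n hn).2)
  exact ⟨⟨max N 1, le_max_right _ _, fun n hn => hpos n (le_of_max_le_left hn)⟩,
    max N 1, le_max_right _ _, hpos _ (le_max_left _ _)⟩
end
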